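/- arXiv:2303.02791 — 2 statements merged into one kernel-verified Lean document; each statement's English description precedes it below -/
import Mathlib

section
/- Let G be a finite simple graph with vertex set {x_1,...,x_n} and let x be a vertex of G. Then for every integer s ≥ 1, I(G)^{s} + (x) = I(G\x)^{s} + (x), where G\x is the graph obtained by deleting the vertex x and all edges incident to it, and the edge ideal of G\x is regarded as an ideal of the same polynomial ring S. -/
open MvPolynomial

noncomputable section

/-! Generalities on graded pieces, Betti numbers and Castelnuovo–Mumford regularity
of homogeneous ideals in a polynomial ring, via the Koszul complex. -/

variable (K : Type) [Field K] (n : ℕ)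

/-- The degree `d` graded piece of an ideal `I ⊆ K[x_1, …, x_n]`, as a `K`-subspace
(`⊥` for negative `d`). -/
def degPiece (I : Ideal (MvPolynomial (Fin n) K)) (d : ℤ) :
    Submodule K (MvPolynomial (Fin n) K) :=
  if 0 ≤ d then (Submodule.restrictScalars K I) ⊓ homogeneousSubmodule (Fin n) K d.toNat
  else ⊥

theorem mulX_mem (I : Ideal (MvPolynomial (Fin n) K)) (k : Fin n) (d : ℤ)
    {x : MvPolynomial (Fin n) K} (hx : x ∈ degPiece K n I d) :
    (X k : MvPolynomial (Fin n) K) * x ∈ degPiece K n I (d + 1) := by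
  by_cases h : 0 ≤ d
  · rw [degPiece, if_pos h, Submodule.mem_inf] at hx
    rw [degPiece, if_pos (by omega : (0:ℤ) ≤ d + 1), Submodule.mem_inf]
    constructor
    · exact Ideal.mul_mem_left I _ hx.1
    · rw [mem_homogeneousSubmodule]
      have h2 := (isHomogeneous_X K k).mul ((mem_homogeneousSubmodule _ _).1 hx.2)
      have h3 : (d + 1).toNat = 1 + d.toNat := by omega
      rw [h3]
      exact h2
  · rw [degPiece, if_neg h, Submodule.mem_bot] at hx
    subst hx
    rw [mul_zero]
    exact Submodule.zero_mem _

/-- Multiplication by the variable `x_k`, as a map between graded pieces. -/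
def mulXmap (I : Ideal (MvPolynomial (Fin n) K)) (k : Fin n) (d e : ℤ) (h : e = d + 1) :
    degPiece K n I d →ₗ[K] degPiece K n I e :=
  LinearMap.restrict (LinearMap.mulLeft K (X k)) (by
    intro x hx
    subst h
    simpa using mulX_mem K n I k d hx)

/-- The differential, in internal degree `j`, of the complex obtained by tensoring the
ideal `I` with the Koszul complex on `x_1, …, x_n`; its homology computes
`Tor_i(I, K)_j`, whose dimension is the graded Betti number `β_{i,j}(I)`. -/
def koszulD (I : Ideal (MvPolynomial (Fin n) K)) (j i : ℕ) :
    ({T : Finset (Fin n) // T.card = i + 1} → degPiece K n I ((j : ℤ) - (i + 1)))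
      →ₗ[K] ({T : Finset (Fin n) // T.card = i} → degPiece K n I ((j : ℤ) - i)) :=
  LinearMap.pi fun T => ∑ k : Fin n,
    if h : k ∈ T.1 then 0
    else ((-1 : K) ^ (T.1.filter (fun l => l < k)).card) •
      ((mulXmap K n I k ((j : ℤ) - (i + 1)) ((j : ℤ) - i) (by ring)).comp
        (LinearMap.proj (⟨insert k T.1, by
          rw [Finset.card_insert_of_notMem h, T.2]⟩ : {T : Finset (Fin n) // T.card = i + 1})))

/-- The cycles of the (internal degree `j`) Koszul complex of `I` in homological degree `i`. -/
def kerChain (I : Ideal (MvPolynomial (Fin n) K)) (j : ℕ) :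
    (i : ℕ) → Submodule K ({T : Finset (Fin n) // T.card = i} → degPiece K n I ((j : ℤ) - i))
  | 0 => ⊤
  | (i + 1) => LinearMap.ker (koszulD K n I j i)

/-- The graded Betti number `β_{i,j}(I) = dim_K Tor_i(I, K)_j`. -/
def betti (I : Ideal (MvPolynomial (Fin n) K)) (i j : ℕ) : ℕ :=
  Module.finrank K (kerChain K n I j i) -
    Module.finrank K
      ((LinearMap.range (koszulD K n I j i) ⊓ kerChain K n I j i) : Submodule K _)

/-- The Castelnuovo–Mumford regularity `reg(I) = max { j - i | β_{i,j}(I) ≠ 0 }`. -/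
def reg (I : Ideal (MvPolynomial (Fin n) K)) : ℤ :=
  sSup {r : ℤ | ∃ i j : ℕ, betti K n I i j ≠ 0 ∧ r = (j : ℤ) - i}

/-- The squarefree part of a monomial ideal: the ideal generated by the squarefree
monomials belonging to it. -/
def sqfreePart (I : Ideal (MvPolynomial (Fin n) K)) : Ideal (MvPolynomial (Fin n) K) :=
  Ideal.span {m | m ∈ I ∧ ∃ A : Finset (Fin n), m = ∏ v ∈ A, X v}

/-- The `s`-th symbolic power of a (squarefree monomial) ideal:
the intersection of the `s`-th powers of its minimal primes; `S` for `s ≤ 0`. -/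
def symbPow (I : Ideal (MvPolynomial (Fin n) K)) (s : ℤ) : Ideal (MvPolynomial (Fin n) K) :=
  if s ≤ 0 then ⊤ else ⨅ p ∈ I.minimalPrimes, p ^ s.toNat

/-- `ssp I s` is `I^{s}`, the squarefree part of the `s`-th symbolic power of `I`. -/
def ssp (I : Ideal (MvPolynomial (Fin n) K)) (s : ℤ) : Ideal (MvPolynomial (Fin n) K) :=
  sqfreePart K n (symbPow K n I s)

/-- `sqPow I s` is `I^[s]`, the squarefree part of the ordinary power `I^s`. -/
def sqPow (I : Ideal (MvPolynomial (Fin n) K)) (s : ℕ) : Ideal (MvPolynomial (Fin n) K) :=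
  sqfreePart K n (I ^ s)

/-- The height of an ideal: the minimum of the heights of its minimal primes. -/
def heightI (I : Ideal (MvPolynomial (Fin n) K)) : ℕ∞ :=
  ⨅ p : I.minimalPrimes, Order.height (⟨p.1, p.2.1.1⟩ : PrimeSpectrum (MvPolynomial (Fin n) K))

/-- The colon ideal `(I : u)`. -/
def colonOf (I : Ideal (MvPolynomial (Fin n) K)) (u : MvPolynomial (Fin n) K) :
    Ideal (MvPolynomial (Fin n) K) :=
  Submodule.colon I (Ideal.span {u})

/-- `u` is a minimal monomial generator of the monomial ideal `I`:
`u` is a monomial belonging to `I` and `u/x_k ∉ I` for every variable `x_k` dividing `u`. -/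
def IsMinGen (I : Ideal (MvPolynomial (Fin n) K)) (u : MvPolynomial (Fin n) K) : Prop :=
  ∃ d : Fin n →₀ ℕ, u = monomial d (1 : K) ∧ u ∈ I ∧
    ∀ k : Fin n, d k ≠ 0 → monomial (d - Finsupp.single k 1) (1 : K) ∉ I

/-! Graph-theoretic notions. -/

/-- The graph obtained from `G` by deleting the vertices in `U` (and all edges meeting `U`),
on the same vertex set. -/
def delVerts (G : SimpleGraph (Fin n)) (U : Set (Fin n)) : SimpleGraph (Fin n) where
  Adj v w := G.Adj v w ∧ v ∉ U ∧ w ∉ U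
  symm := ⟨fun _ _ h => ⟨h.1.symm, h.2.2, h.2.1⟩⟩
  loopless := ⟨fun v h => G.irrefl h.1⟩


/-- The edge ideal `I(G)` of a graph `G` on the vertex set `{x_1, …, x_n}`. -/
def edgeIdeal (G : SimpleGraph (Fin n)) : Ideal (MvPolynomial (Fin n) K) :=
  Ideal.span {m | ∃ v w, G.Adj v w ∧ m = X v * X w}

/-- `a`, `b` enumerate the endpoints of a matching of `G` of size `k`:
the edges `a i b i` are pairwise disjoint edges of `G`. -/
def IsMatching (G : SimpleGraph (Fin n)) (k : ℕ) (a b : Fin k → Fin n) : Prop :=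
  (∀ i, G.Adj (a i) (b i)) ∧
    ∀ i j, i ≠ j → a i ≠ a j ∧ b i ≠ b j ∧ a i ≠ b j

/-- The matching number `match(G)`. -/
def matchNum (G : SimpleGraph (Fin n)) : ℕ :=
  sSup {k | ∃ a b : Fin k → Fin n, IsMatching n G k a b}

/-- An induced matching: a matching such that no edge of `G` other than the matching edges
joins two of its vertices. -/
def IsInducedMatching (G : SimpleGraph (Fin n)) (k : ℕ) (a b : Fin k → Fin n) : Prop :=
  IsMatching n G k a b ∧ ∀ i j, i ≠ j →
    ¬ G.Adj (a i) (a j) ∧ ¬ G.Adj (a i) (b j) ∧ ¬ G.Adj (b i) (a j) ∧ ¬ G.Adj (b i) (b j)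

/-- The induced matching number `ind-match(G)`. -/
def indMatchNum (G : SimpleGraph (Fin n)) : ℕ :=
  sSup {k | ∃ a b : Fin k → Fin n, IsInducedMatching n G k a b}

/-- An ordered matching `{a_i b_i}`: the `a_i` form an independent set and
`a_i b_j ∈ E(G)` implies `i ≤ j`. -/
def IsOrderedMatching (G : SimpleGraph (Fin n)) (k : ℕ) (a b : Fin k → Fin n) : Prop :=
  IsMatching n G k a b ∧ (∀ i j, ¬ G.Adj (a i) (a j)) ∧ ∀ i j, G.Adj (a i) (b j) → i ≤ j

/-- The ordered matching number `ord-match(G)`. -/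
def ordMatchNum (G : SimpleGraph (Fin n)) : ℕ :=
  sSup {k | ∃ a b : Fin k → Fin n, IsOrderedMatching n G k a b}

/-- A graph is chordal if it has no induced cycle of length at least four. -/
def IsChordal (G : SimpleGraph (Fin n)) : Prop :=
  ∀ k : ℕ, 4 ≤ k → ∀ f : ZMod k → Fin n, Function.Injective f →
    ¬ (∀ i j : ZMod k, G.Adj (f i) (f j) ↔ (j = i + 1 ∨ i = j + 1))


/-- The star triangle graph with `t` triangles: vertex `0` is the common vertex of all the
triangles, and for `0 ≤ i < t` the vertices `2i+1`, `2i+2` are the other two vertices of the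
`i`-th triangle. -/
def starTriangle (t : ℕ) : SimpleGraph (Fin (2 * t + 1)) where
  Adj u v := u ≠ v ∧ ((u : ℕ) = 0 ∨ (v : ℕ) = 0 ∨ ((u : ℕ) - 1) / 2 = ((v : ℕ) - 1) / 2)
  symm := by
    constructor
    intro u v h
    exact ⟨h.1.symm, by tauto⟩
  loopless := by constructor; intro u h; exact h.1 rfl

end

/-! The substitution `x ↦ 0` maps `I(G)` into `I(G \ x)`, so every minimal prime of
`I(G \ x)` contains the image of some minimal prime of `I(G)`; hence the substitution maps
`I(G)^(s)` into `I(G \ x)^(s)`. A squarefree generator of `I(G)^{s}` either contains `x`, or is fixed by the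
substitution and so already lies in `I(G \ x)^{s}`. The reverse inclusion is monotonicity. -/

section

variable {K : Type} [Field K] {n : ℕ}

lemma sqfreePart_mono {I J : Ideal (MvPolynomial (Fin n) K)} (h : I ≤ J) :
    sqfreePart K n I ≤ sqfreePart K n J :=
  Ideal.span_mono fun _ hm => ⟨h hm.1, hm.2⟩

lemma map_symbPow_le {I J : Ideal (MvPolynomial (Fin n) K)}
    (φ : MvPolynomial (Fin n) K →+* MvPolynomial (Fin n) K) (h : I.map φ ≤ J) (s : ℤ) :
    (symbPow K n I s).map φ ≤ symbPow K n J s := by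
  unfold symbPow
  split_ifs with hs
  · exact le_top
  refine le_iInf₂ fun q hq => ?_
  have hIq : I ≤ q.comap φ := Ideal.map_le_iff_le_comap.1 (h.trans hq.1.2)
  have := hq.1.1
  obtain ⟨p, hp, hpq⟩ := Ideal.exists_minimalPrimes_le hIq
  calc ((⨅ p ∈ I.minimalPrimes, p ^ s.toNat).map φ)
      ≤ (p ^ s.toNat).map φ := Ideal.map_mono (iInf₂_le p hp)
    _ = (p.map φ) ^ s.toNat := Ideal.map_pow _ _ _
    _ ≤ q ^ s.toNat :=
        Ideal.pow_right_mono (Ideal.map_le_iff_le_comap.2 hpq) _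

lemma symbPow_mono {I J : Ideal (MvPolynomial (Fin n) K)} (h : I ≤ J) (s : ℤ) :
    symbPow K n I s ≤ symbPow K n J s := by
  simpa using map_symbPow_le (RingHom.id _) (by simpa using h) s

lemma edgeIdeal_delVerts_le (G : SimpleGraph (Fin n)) (U : Set (Fin n)) :
    edgeIdeal K n (delVerts n G U) ≤ edgeIdeal K n G :=
  Ideal.span_mono fun _ ⟨v, w, hvw, hm⟩ => ⟨v, w, hvw.1, hm⟩

noncomputable def zeroVar (x : Fin n) : MvPolynomial (Fin n) K →ₐ[K] MvPolynomial (Fin n) K :=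
  aeval (Function.update X x 0)

lemma zeroVar_X_self (x : Fin n) : zeroVar (K := K) x (X x) = 0 := by
  simp [zeroVar]

lemma zeroVar_X_of_ne {x v : Fin n} (h : v ≠ x) : zeroVar (K := K) x (X v) = X v := by
  simp [zeroVar, Function.update_of_ne h]

lemma zeroVar_prod_X {x : Fin n} {A : Finset (Fin n)} (hx : x ∉ A) :
    zeroVar (K := K) x (∏ v ∈ A, X v) = ∏ v ∈ A, X v := by
  rw [map_prod]
  exact Finset.prod_congr rfl fun v hv => zeroVar_X_of_ne (ne_of_mem_of_not_mem hv hx)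

lemma map_edgeIdeal_zeroVar_le (G : SimpleGraph (Fin n)) (x : Fin n) :
    (edgeIdeal K n G).map (zeroVar (K := K) x) ≤ edgeIdeal K n (delVerts n G {x}) := by
  rw [edgeIdeal, Ideal.map_span, Ideal.span_le]
  rintro _ ⟨_, ⟨v, w, hvw, rfl⟩, rfl⟩
  rw [map_mul]
  by_cases hv : v = x
  · simp [hv, zeroVar_X_self]
  by_cases hw : w = x
  · simp [hw, zeroVar_X_self]
  rw [zeroVar_X_of_ne hv, zeroVar_X_of_ne hw]
  exact Ideal.subset_span ⟨v, w, ⟨hvw, hv, hw⟩, rfl⟩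

lemma sqfreePart_le_sup_span_X {I J : Ideal (MvPolynomial (Fin n) K)} {x : Fin n}
    (h : I.map (zeroVar (K := K) x) ≤ J) :
    sqfreePart K n I ≤ sqfreePart K n J ⊔ Ideal.span {X x} := by
  refine Ideal.span_le.2 ?_
  rintro _ ⟨hm, A, rfl⟩
  by_cases hx : x ∈ A
  · apply Ideal.mem_sup_right
    rw [← Finset.prod_erase_mul A _ hx]
    exact Ideal.mul_mem_left _ _ (Ideal.subset_span rfl)
  · apply Ideal.mem_sup_left
    refine Ideal.subset_span ⟨?_, A, rfl⟩
    rw [← zeroVar_prod_X (K := K) hx]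
    exact h (Ideal.mem_map_of_mem _ hm)

end

theorem ssp_add_var_eq_delete_vertex_general
    (K : Type) [Field K] (n : ℕ) (G : SimpleGraph (Fin n)) (x : Fin n)
    (s : ℕ) :
    ssp K n (edgeIdeal K n G) (s : ℤ) + Ideal.span {(X x : MvPolynomial (Fin n) K)} =
      ssp K n (edgeIdeal K n (delVerts n G {x})) (s : ℤ) +
        Ideal.span {(X x : MvPolynomial (Fin n) K)} := by
  rw [Ideal.add_eq_sup, Ideal.add_eq_sup]
  apply le_antisymm
  · exact sup_le (sqfreePart_le_sup_span_X
      (map_symbPow_le _ (map_edgeIdeal_zeroVar_le G x) _)) le_sup_right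
  · exact sup_le_sup_right
      (sqfreePart_mono (symbPow_mono (edgeIdeal_delVerts_le G {x}) _)) _

/-- For every vertex `x` of `G` and every `s ≥ 1`,
`I(G)^{s} + (x) = I(G \ x)^{s} + (x)`. -/
theorem ssp_add_var_eq_delete_vertex
    (K : Type) [Field K] (n : ℕ) (G : SimpleGraph (Fin n)) (x : Fin n)
    (s : ℕ) (hs : 1 ≤ s) :
    ssp K n (edgeIdeal K n G) (s : ℤ) + Ideal.span {(X x : MvPolynomial (Fin n) K)} =
      ssp K n (edgeIdeal K n (delVerts n G {x})) (s : ℤ) +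
        Ideal.span {(X x : MvPolynomial (Fin n) K)} :=
  ssp_add_var_eq_delete_vertex_general K n G x s
end

section
/- Let G be a finite simple graph and assume that x_1 is a simplicial vertex of G with N_G(x_1) = {x_2,...,x_d} for some integer d ≥ 2. Then for every integer s ≥ 1, the colon ideal (I(G)^{s} : x_1 x_2 ⋯ x_d) equals I(G \ N_G[x_1])^{s−d+1}, where G \ N_G[x_1] is the graph obtained by deleting x_1 and all its neighbors (and all edges meeting them), and by convention I^{t} = S for t ≤ 0. -/
open MvPolynomial

/-! The minimal primes of `I(G)` are the ideals `(x_v : v ∈ C)` of the minimal vertex covers `C`,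
so a squarefree monomial `x_B` lies in `I(G)^(s)` iff `s ≤ |B ∩ C|` for every vertex cover `C`.
As `I(G)^{s}` is spanned by squarefree monomials, `f · x_N` (with `N = N_G[x]`) lies in it iff
`x_{supp a ∪ N}` does for every exponent `a` of `f`, which turns the theorem into a statement about
covers. Since `N` is a clique of size `d`, every cover of `G` contains at least `d - 1` vertices
of `N`, and a cover `C` of `G \ N` yields the cover `(C \ N) ∪ N_G(x)` of `G`, which meets `N` in
exactly `d - 1` vertices. -/

open Finset

namespace Finsupp
variable {σ : Type*}

theorem support_indicator_one (B : Finset σ) : (indicator B fun _ _ => (1 : ℕ)).support = B := by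
  classical
  ext v
  simp [indicator_apply]

theorem degree_indicator_one (B : Finset σ) : degree (indicator B fun _ _ => (1 : ℕ)) = #B := by
  classical
  rw [degree_apply, support_indicator_one]
  simp +contextual [indicator_apply]

theorem indicator_one_le_iff {B : Finset σ} {a : σ →₀ ℕ} :
    indicator B (fun _ _ => 1) ≤ a ↔ B ⊆ a.support := by
  classical
  simp only [le_def, indicator_apply, Finset.subset_iff, mem_support_iff]
  refine forall_congr' fun v => ?_
  by_cases hv : v ∈ B <;> simp [hv, Nat.one_le_iff_ne_zero]

end Finsupp

namespace MvPolynomial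
variable {σ R : Type*}

section CommSemiring
variable [CommSemiring R]

theorem prod_X_eq_monomial_indicator (B : Finset σ) :
    ∏ v ∈ B, (X v : MvPolynomial σ R) = monomial (Finsupp.indicator B fun _ _ => 1) 1 := by
  simpa using prod_X_pow (R := R) (fun _ => 1) B

theorem support_mul_monomial_one (p : MvPolynomial σ R) (e : σ →₀ ℕ) :
    (p * monomial e 1).support = p.support.map (addRightEmbedding e) :=
  AddMonoidAlgebra.support_coeff_mul_single p _ (by simp) _

theorem prod_X_mem_span_X_image_pow_iff [Nontrivial R] [DecidableEq σ] (B C : Finset σ) (k : ℕ) :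
    ∏ v ∈ B, (X v : MvPolynomial σ R) ∈ Ideal.span (X '' (C : Set σ)) ^ k ↔ k ≤ #(B ∩ C) := by
  constructor
  · intro h
    -- Setting the variables outside `C` to `1` reduces this to `monomial_mem_pow_idealOfVars_iff`.
    let ψ : MvPolynomial σ R →ₐ[R] MvPolynomial σ R := aeval fun v => if v ∈ C then X v else 1
    have hmap : Ideal.map ψ (Ideal.span (X '' (C : Set σ))) ≤ idealOfVars σ R := by
      rw [Ideal.map_span, Ideal.span_le]
      rintro _ ⟨_, ⟨v, hv, rfl⟩, rfl⟩
      exact Ideal.subset_span ⟨v, by simp [ψ, Finset.mem_coe.mp hv]⟩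
    have hψ : ψ (∏ v ∈ B, X v) = ∏ v ∈ B ∩ C, X v := by
      simp only [ψ, map_prod, aeval_X, prod_ite_mem]
    have hmem := Ideal.pow_right_mono hmap k (Ideal.map_pow ψ _ k ▸ Ideal.mem_map_of_mem ψ h)
    rwa [hψ, prod_X_eq_monomial_indicator, monomial_mem_pow_idealOfVars_iff _ _ one_ne_zero,
      Finsupp.degree_indicator_one] at hmem
  · intro h
    rw [← Finset.prod_inter_mul_prod_sdiff B C]
    refine Ideal.mul_mem_right _ _ (Ideal.pow_le_pow_right h ?_)
    rw [← Finset.prod_const]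
    exact Ideal.prod_mem_prod fun v hv => Ideal.subset_span ⟨v, (Finset.mem_inter.mp hv).2, rfl⟩

end CommSemiring

theorem isPrime_span_X_image [CommRing R] [IsDomain R] (C : Set σ) :
    (Ideal.span (X '' C) : Ideal (MvPolynomial σ R)).IsPrime := by
  classical
  set P : Ideal (MvPolynomial σ R) := Ideal.span (X '' C)
  let φ : MvPolynomial σ R →ₐ[R] MvPolynomial σ R := aeval fun v => if v ∈ C then 0 else X v
  -- `φ` kills `X '' C` and is the identity modulo `P`, so its kernel is `P`.
  have hφ : (Ideal.Quotient.mkₐ R P).comp φ = Ideal.Quotient.mkₐ R P := by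
    ext v
    by_cases hv : v ∈ C
    · have hX : (X v : MvPolynomial σ R) ∈ P := Ideal.subset_span ⟨v, hv, rfl⟩
      simp [φ, hv, Ideal.Quotient.eq_zero_iff_mem.mpr hX]
    · simp [φ, hv]
  have hker : P = RingHom.ker φ := by
    refine le_antisymm ?_ fun f hf => ?_
    · rw [Ideal.span_le]
      rintro _ ⟨v, hv, rfl⟩
      simp [φ, hv]
    · rw [← Ideal.Quotient.eq_zero_iff_mem, ← Ideal.Quotient.mkₐ_eq_mk R, ← hφ]
      simp [RingHom.mem_ker.mp hf]
  exact hker ▸ RingHom.ker_isPrime _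

end MvPolynomial

section SquarefreePart

variable {K : Type} [Field K] {n : ℕ}

theorem mem_sqfreePart_iff {J : Ideal (MvPolynomial (Fin n) K)} {f : MvPolynomial (Fin n) K} :
    f ∈ sqfreePart K n J ↔
      ∀ a ∈ f.support, ∏ v ∈ a.support, (X v : MvPolynomial (Fin n) K) ∈ J := by
  classical
  have hgen : {m | m ∈ J ∧ ∃ B : Finset (Fin n), m = ∏ v ∈ B, X v} =
      (monomial · (1 : K)) '' {e | ∃ B : Finset (Fin n), e = Finsupp.indicator B (fun _ _ => 1) ∧
        monomial e (1 : K) ∈ J} := by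
    ext m
    simp only [Set.mem_ofPred_eq, Set.mem_image, prod_X_eq_monomial_indicator]
    constructor
    · rintro ⟨hm, B, rfl⟩
      exact ⟨_, ⟨B, rfl, hm⟩, rfl⟩
    · rintro ⟨_, ⟨B, rfl, hm⟩, rfl⟩
      exact ⟨hm, B, rfl⟩
  rw [sqfreePart, hgen, mem_ideal_span_monomial_image]
  refine forall₂_congr fun a _ => ⟨?_, fun ha => ⟨_, ⟨a.support, rfl, ?_⟩, ?_⟩⟩
  · rintro ⟨_, ⟨B, rfl, hB⟩, hBa⟩
    rw [← prod_X_eq_monomial_indicator] at hB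
    exact J.mem_of_dvd (prod_dvd_prod_of_subset _ _ _ (Finsupp.indicator_one_le_iff.mp hBa)) hB
  · rwa [← prod_X_eq_monomial_indicator]
  · exact Finsupp.indicator_one_le_iff.mpr subset_rfl

theorem mul_prod_X_mem_sqfreePart_iff {J : Ideal (MvPolynomial (Fin n) K)}
    {f : MvPolynomial (Fin n) K} {N : Finset (Fin n)} :
    f * ∏ v ∈ N, X v ∈ sqfreePart K n J ↔
      ∀ a ∈ f.support, ∏ v ∈ a.support ∪ N, (X v : MvPolynomial (Fin n) K) ∈ J := by
  classical
  rw [prod_X_eq_monomial_indicator, mem_sqfreePart_iff, support_mul_monomial_one,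
    Finset.forall_mem_map]
  simp only [addRightEmbedding_apply, Finsupp.support_add_eq_union, Finsupp.support_indicator_one]

end SquarefreePart

section EdgeIdeal

variable {K : Type} [Field K] {n : ℕ} {G : SimpleGraph (Fin n)}

theorem edgeIdeal_le_span_X_image {C : Set (Fin n)} (hC : G.IsVertexCover C) :
    edgeIdeal K n G ≤ Ideal.span (X '' C) := by
  rw [edgeIdeal, Ideal.span_le]
  rintro _ ⟨v, w, hvw, rfl⟩
  rcases hC hvw with hv | hw
  · exact Ideal.mul_mem_right _ _ (Ideal.subset_span ⟨v, hv, rfl⟩)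
  · exact Ideal.mul_mem_left _ _ (Ideal.subset_span ⟨w, hw, rfl⟩)

theorem exists_isVertexCover_of_mem_minimalPrimes_edgeIdeal {p : Ideal (MvPolynomial (Fin n) K)}
    (hp : p ∈ (edgeIdeal K n G).minimalPrimes) :
    ∃ C : Finset (Fin n), G.IsVertexCover C ∧ p = Ideal.span (X '' (C : Set (Fin n))) := by
  classical
  let C : Finset (Fin n) := {v | X v ∈ p}
  have hC : G.IsVertexCover C := fun v w hvw => by
    simpa [C] using hp.1.1.mem_or_mem (hp.1.2 (Ideal.subset_span ⟨v, w, hvw, rfl⟩))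
  have hle : Ideal.span (X '' (C : Set (Fin n))) ≤ p := by
    rw [Ideal.span_le]
    rintro _ ⟨v, hv, rfl⟩
    simpa [C] using hv
  exact ⟨C, hC, le_antisymm (hp.2 ⟨isPrime_span_X_image _, edgeIdeal_le_span_X_image hC⟩ hle) hle⟩

theorem iInf_minimalPrimes_edgeIdeal_pow (k : ℕ) :
    ⨅ p ∈ (edgeIdeal K n G).minimalPrimes, p ^ k =
      ⨅ (C : Finset (Fin n)) (_ : G.IsVertexCover C), Ideal.span (X '' (C : Set (Fin n))) ^ k := by
  refine le_antisymm (le_iInf₂ fun C hC => ?_) (le_iInf₂ fun p hp => ?_)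
  · have := isPrime_span_X_image (R := K) (C : Set (Fin n))
    obtain ⟨p, hp, hpC⟩ := Ideal.exists_minimalPrimes_le (edgeIdeal_le_span_X_image (K := K) hC)
    exact (iInf₂_le p hp).trans (Ideal.pow_right_mono hpC k)
  · obtain ⟨C, hC, rfl⟩ := exists_isVertexCover_of_mem_minimalPrimes_edgeIdeal hp
    exact iInf₂_le C hC

theorem prod_X_mem_symbPow_edgeIdeal_iff (s : ℤ) (B : Finset (Fin n)) :
    ∏ v ∈ B, (X v : MvPolynomial (Fin n) K) ∈ symbPow K n (edgeIdeal K n G) s ↔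
      ∀ C : Finset (Fin n), G.IsVertexCover C → s ≤ #(B ∩ C) := by
  classical
  rw [symbPow]
  split_ifs with hs
  · exact iff_of_true Submodule.mem_top fun C _ => hs.trans (Int.natCast_nonneg _)
  · rw [iInf_minimalPrimes_edgeIdeal_pow]
    simp only [Submodule.mem_iInf, prod_X_mem_span_X_image_pow_iff]
    exact forall₂_congr fun C _ => by omega

end EdgeIdeal

theorem SimpleGraph.IsClique.card_sdiff_le_one_of_isVertexCover {V : Type*} [DecidableEq V]
    {G : SimpleGraph V} {N C : Finset V} (hN : G.IsClique (N : Set V))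
    (hC : G.IsVertexCover C) : #(N \ C) ≤ 1 := by
  refine Finset.card_le_one.mpr fun u hu v hv => by_contra fun huv => ?_
  rw [mem_sdiff] at hu hv
  exact (hC (hN hu.1 hv.1 huv)).elim hu.2 hv.2

section SimplicialVertex

variable {n : ℕ} {G : SimpleGraph (Fin n)}

theorem SimpleGraph.IsVertexCover.sdiff_delVerts {c : Set (Fin n)} (hc : G.IsVertexCover c)
    (U : Set (Fin n)) : (delVerts n G U).IsVertexCover (c \ U) :=
  fun _ _ ⟨hvw, hv, hw⟩ => (hc hvw).imp (fun h => ⟨h, hv⟩) (fun h => ⟨h, hw⟩)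

theorem isVertexCover_sdiff_union_of_delVerts {x : Fin n} {A : Set (Fin n)}
    (hA : ∀ w, w ∈ A ↔ G.Adj x w) {c : Set (Fin n)}
    (hc : (delVerts n G (insert x A)).IsVertexCover c) :
    G.IsVertexCover (c \ insert x A ∪ A) := by
  intro v w hvw
  by_cases hv : v ∈ insert x A
  · rcases hv with rfl | hv
    · exact Or.inr (Or.inr ((hA w).mpr hvw))
    · exact Or.inl (Or.inr hv)
  by_cases hw : w ∈ insert x A
  · rcases hw with rfl | hw
    · exact Or.inl (Or.inr ((hA v).mpr hvw.symm))
    · exact Or.inr (Or.inr hw)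
  exact (hc ⟨hvw, hv, hw⟩).imp (fun h => Or.inl ⟨h, hv⟩) (fun h => Or.inl ⟨h, hw⟩)

theorem forall_isVertexCover_le_card_inter_iff_delVerts {x : Fin n} {A : Finset (Fin n)}
    (hA : ∀ w, w ∈ A ↔ G.Adj x w) (hclique : G.IsClique (A : Set (Fin n))) (s : ℤ)
    (S : Finset (Fin n)) :
    (∀ C : Finset (Fin n), G.IsVertexCover C → s ≤ #((S ∪ insert x A) ∩ C)) ↔
      ∀ C : Finset (Fin n), (delVerts n G (insert x (A : Set (Fin n)))).IsVertexCover C →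
        s - #A ≤ #(S ∩ C) := by
  classical
  have hxA : x ∉ A := fun h => G.irrefl ((hA x).mp h)
  constructor
  · intro h C hC
    have hs := h (C \ insert x A ∪ A) (by simpa using isVertexCover_sdiff_union_of_delVerts hA hC)
    have hsub : (S ∪ insert x A) ∩ (C \ insert x A ∪ A) ⊆ S ∩ C ∪ A := by
      intro v; simp only [mem_inter, mem_union, mem_sdiff, mem_insert]; tauto
    have hcard := (card_le_card hsub).trans (card_union_le _ _)
    omega
  · intro h C hC
    have hN : G.IsClique (insert x A : Finset (Fin n)) := by
      rw [coe_insert, SimpleGraph.isClique_insert]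
      exact ⟨hclique, fun w hw _ => (hA w).mp hw⟩
    have ht := h (C \ insert x A) (by simpa using hC.sdiff_delVerts (insert x (A : Set (Fin n))))
    have hle := hN.card_sdiff_le_one_of_isVertexCover hC
    have hsplit := card_sdiff_add_card_inter (insert x A) C
    have hsub : S ∩ (C \ insert x A) ∪ insert x A ∩ C ⊆ (S ∪ insert x A) ∩ C := by
      intro v; simp only [mem_inter, mem_union, mem_sdiff]; tauto
    have hdisj : Disjoint (S ∩ (C \ insert x A)) (insert x A ∩ C) :=
      disjoint_left.mpr fun v hv hv' => (mem_sdiff.mp (mem_inter.mp hv).2).2 (mem_inter.mp hv').1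
    have hcard := card_le_card hsub
    rw [card_union_of_disjoint hdisj] at hcard
    rw [card_insert_of_notMem hxA] at hsplit
    omega

end SimplicialVertex

theorem ssp_colon_simplicial_vertex_general
    (K : Type) [Field K] (n : ℕ) (G : SimpleGraph (Fin n)) (x : Fin n)
    (d : ℕ) (hd : 2 ≤ d) (A : Finset (Fin n))
    (hA : ∀ w, w ∈ A ↔ G.Adj x w) (hcard : A.card = d - 1)
    (hsimp : ∀ p ∈ A, ∀ q ∈ A, p ≠ q → G.Adj p q)
    (s : ℕ) :
    colonOf K n (ssp K n (edgeIdeal K n G) (s : ℤ))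
        ((X x : MvPolynomial (Fin n) K) * ∏ w ∈ A, X w) =
      ssp K n (edgeIdeal K n (delVerts n G (insert x (A : Set (Fin n)))))
        ((s : ℤ) - d + 1) := by
  classical
  have hxA : x ∉ A := fun h => G.irrefl ((hA x).mp h)
  have hexp : (s : ℤ) - d + 1 = s - #A := by omega
  ext f
  rw [colonOf, Ideal.mem_colon_span_singleton, ← prod_insert hxA, ssp, ssp,
    mul_prod_X_mem_sqfreePart_iff, mem_sqfreePart_iff, hexp]
  refine forall₂_congr fun a _ => ?_
  rw [prod_X_mem_symbPow_edgeIdeal_iff, prod_X_mem_symbPow_edgeIdeal_iff]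
  exact forall_isVertexCover_le_card_inter_iff_delVerts hA hsimp s a.support

/-- If `x` is a simplicial vertex of `G` whose (nonempty) neighborhood is
`A` with `|A| = d - 1` (so the closed neighborhood has `d ≥ 2` elements), then for every
`s ≥ 1`, `(I(G)^{s} : x·∏_{w ∈ A} w) = I(G \ N_G[x])^{s-d+1}`. -/
theorem ssp_colon_simplicial_vertex
    (K : Type) [Field K] (n : ℕ) (G : SimpleGraph (Fin n)) (x : Fin n)
    (d : ℕ) (hd : 2 ≤ d) (A : Finset (Fin n))
    (hA : ∀ w, w ∈ A ↔ G.Adj x w) (hcard : A.card = d - 1)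
    (hsimp : ∀ p ∈ A, ∀ q ∈ A, p ≠ q → G.Adj p q)
    (s : ℕ) (hs : 1 ≤ s) :
    colonOf K n (ssp K n (edgeIdeal K n G) (s : ℤ))
        ((X x : MvPolynomial (Fin n) K) * ∏ w ∈ A, X w) =
      ssp K n (edgeIdeal K n (delVerts n G (insert x (A : Set (Fin n)))))
        ((s : ℤ) - d + 1) :=
  ssp_colon_simplicial_vertex_general K n G x d hd A hA hcard hsimp s
end
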